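/- Joyce's piecewise defined map F⁺ : ℂ³ → ℝ × ℂ is continuous on all of ℂ³ (in particular, the three defining expressions agree on the overlaps |z₁| = |z₂| ≠ 0 and match in the limit z₁ = z₂ = 0). -/

import Mathlib

open Complex

/-- Joyce's piecewise smooth map `F⁺ : ℂ³ → ℝ × ℂ`. -/
noncomputable def Fplus (z : Fin 3 → ℂ) : ℝ × ℂ :=
  (1 / 2 * (‖z 0‖ ^ 2 - ‖z 1‖ ^ 2),
    if z 0 = 0 ∧ z 1 = 0 then z 2
    else if ‖z 1‖ ≤ ‖z 0‖ then
      z 2 - (starRingEnd ℂ) (z 0) * (starRingEnd ℂ) (z 1) / (‖z 0‖ : ℂ)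
    else
      z 2 - (starRingEnd ℂ) (z 0) * (starRingEnd ℂ) (z 1) / (‖z 1‖ : ℂ))

/-!
The three branches of the second component are one expression,
`z₃ - z̄₁ z̄₂ / max (|z₁|, |z₂|)`, where at `z₁ = z₂ = 0` the division by zero gives `0`.
Since `|ab| / max (|a|, |b|) = min (|a|, |b|)`, the correction term tends to `0` at the origin,
and away from it it is a quotient of continuous functions with nonvanishing denominator.
-/

open ComplexConjugate

section MulDivMaxNorm

variable {𝕜 : Type*} [RCLike 𝕜]

theorem norm_mul_div_max_norm (a b : 𝕜) :
    ‖a * b / ((max ‖a‖ ‖b‖ : ℝ) : 𝕜)‖ = min ‖a‖ ‖b‖ := by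
  rcases eq_or_lt_of_le (le_max_of_le_left (norm_nonneg a) : 0 ≤ max ‖a‖ ‖b‖) with h | h
  · have ha : ‖a‖ = 0 := le_antisymm (h ▸ le_max_left _ _) (norm_nonneg a)
    simp [norm_eq_zero.mp ha]
  · rw [norm_div, norm_mul, RCLike.norm_ofReal, abs_of_pos h, ← min_mul_max,
      mul_div_cancel_right₀ _ h.ne']

theorem continuous_mul_div_max_norm :
    Continuous fun p : 𝕜 × 𝕜 => p.1 * p.2 / ((max ‖p.1‖ ‖p.2‖ : ℝ) : 𝕜) := by
  rw [continuous_iff_continuousAt]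
  rintro ⟨a, b⟩
  by_cases hab : a = 0 ∧ b = 0
  · obtain ⟨rfl, rfl⟩ := hab
    have hfst : Filter.Tendsto (fun p : 𝕜 × 𝕜 => ‖p.1‖) (nhds (0, 0)) (nhds 0) :=
      continuous_fst.norm.tendsto' _ _ (by simp)
    simpa [ContinuousAt] using squeeze_zero_norm
      (fun p : 𝕜 × 𝕜 => (norm_mul_div_max_norm p.1 p.2).le.trans (min_le_left _ _)) hfst
  · have hmax : ((max ‖a‖ ‖b‖ : ℝ) : 𝕜) ≠ 0 := by
      rw [RCLike.ofReal_ne_zero]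
      rcases not_and_or.mp hab with h | h
      · exact (lt_max_of_lt_left (norm_pos_iff.mpr h)).ne'
      · exact (lt_max_of_lt_right (norm_pos_iff.mpr h)).ne'
    exact ContinuousAt.div (by fun_prop) (by fun_prop) hmax

end MulDivMaxNorm

theorem Fplus_eq (z : Fin 3 → ℂ) :
    Fplus z = (1 / 2 * (‖z 0‖ ^ 2 - ‖z 1‖ ^ 2),
      z 2 - conj (z 0) * conj (z 1) / ((max ‖conj (z 0)‖ ‖conj (z 1)‖ : ℝ) : ℂ)) := by
  simp only [Fplus, Complex.norm_conj]
  congr 1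
  split_ifs with h0 h1
  · simp [h0.1, h0.2]
  · rw [max_eq_left h1]
  · rw [max_eq_right (le_of_not_ge h1)]

/-- Joyce's piecewise defined map `F⁺` is continuous on all of `ℂ³`. -/
theorem Fplus_continuous : Continuous Fplus := by
  rw [funext Fplus_eq]
  have hcorr : Continuous fun z : Fin 3 → ℂ =>
      conj (z 0) * conj (z 1) / ((max ‖conj (z 0)‖ ‖conj (z 1)‖ : ℝ) : ℂ) :=
    continuous_mul_div_max_norm.comp (f := fun z : Fin 3 → ℂ => (conj (z 0), conj (z 1)))
      (by fun_prop)
  fun_prop
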